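/- arXiv:2002.05102 — 3 statements merged into one kernel-verified Lean document; each statement's English description precedes it below -/
import Mathlib

section
/- Let G be the group generated by two elements A, B subject to the relations A^3 = 1, B^2 = 1, and ABABAB = BABABA (the complex reflection group G_6). Then G has order 48. -/
/-- The defining relations of the complex reflection group `G₆`:
`A³ = 1`, `B² = 1`, and `(AB)³ = (BA)³` (i.e. `ABABAB = BABABA`). -/
def G6rels : Set (FreeGroup (Fin 2)) :=
  {FreeGroup.of 0 ^ 3, FreeGroup.of 1 ^ 2,
    (FreeGroup.of 0 * FreeGroup.of 1) ^ 3 * ((FreeGroup.of 1 * FreeGroup.of 0) ^ 3)⁻¹}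

/-- The complex reflection group `G₆` as a presented group. -/
def G6 : Type := PresentedGroup G6rels

instance : Group G6 := by unfold G6; infer_instance

/-!
Put `z = (AB)³`. Since `A (BA)³ = (AB)³ A` and `B (AB)³ = (BA)³ B` in any group, the
relation `(AB)³ = (BA)³` makes `z` central, and reducing the word `ABABA²B` in two ways
gives `z⁴ = 1`. Right multiplication by `A` and by `B` then maps the 48 products `zⁱ w`
(`i < 4`, `w` one of twelve words lifting the elements of `G₆ / ⟨z⟩ ≅ A₄`) to one another,
as a coset enumeration shows, so these products exhaust `G₆`. They are pairwise distinct
because their images under two reflections of orders 3 and 2 in `GL₂(𝔽₁₃)` are.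
-/

lemma pow_val_add_of_pow_eq_one {M : Type*} [Monoid M] {n : ℕ} [NeZero n] {z : M}
    (hz : z ^ n = 1) (i j : ZMod n) : z ^ (i + j).val = z ^ i.val * z ^ j.val := by
  rw [ZMod.val_add, ← pow_eq_pow_mod _ hz, pow_add]

namespace G6

variable {H : Type*} [Group H] {x y : H}

structure Relations (x y : H) : Prop where
  x_pow_three : x ^ 3 = 1
  y_sq : y ^ 2 = 1
  mul_pow_three : (x * y) ^ 3 = (y * x) ^ 3

def word (x y : H) : Fin 12 → H :=
  ![1, x, y, x * x, x * y, y * x, x * x * y, x * y * x, y * x * x, y * x * y,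
    x * x * y * x, x * y * x * x]

def normalForm (x y : H) (p : ZMod 4 × Fin 12) : H :=
  ((x * y) ^ 3) ^ p.1.val * word x y p.2

lemma map_normalForm {K : Type*} [Group K] (f : H →* K) (x y : H) (p : ZMod 4 × Fin 12) :
    f (normalForm x y p) = normalForm (f x) (f y) p := by
  obtain ⟨i, t⟩ := p
  fin_cases t <;> simp [normalForm, word]

-- Entry `t` is the index of `word x y t * x` (resp. `* y`) in `normalForm x y`.
def mulXTable : Fin 12 → ZMod 4 × Fin 12 :=
  ![(0, 1), (0, 3), (0, 5), (0, 0), (0, 7), (0, 8), (0, 10), (0, 11), (0, 2), (1, 6), (3, 9),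
    (0, 4)]

def mulYTable : Fin 12 → ZMod 4 × Fin 12 :=
  ![(0, 2), (0, 4), (0, 0), (0, 6), (0, 1), (0, 9), (0, 3), (1, 8), (3, 7), (0, 5), (1, 11),
    (3, 10)]

def applyTable (s : Fin 12 → ZMod 4 × Fin 12) (p : ZMod 4 × Fin 12) : ZMod 4 × Fin 12 :=
  (p.1 + (s p.2).1, (s p.2).2)

namespace Relations

local notation "ζ" => (x * y) ^ 3

lemma x_mul_x_mul_x (h : Relations x y) (g : H) : x * (x * (x * g)) = g := by
  rw [← mul_assoc, ← mul_assoc, ← pow_three', h.x_pow_three, one_mul]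

lemma y_mul_y (h : Relations x y) (g : H) : y * (y * g) = g := by
  rw [← mul_assoc, ← pow_two, h.y_sq, one_mul]

lemma commute_x (h : Relations x y) : Commute x ζ := by
  rw [Commute, SemiconjBy, mul_pow_mul, h.mul_pow_three]

lemma commute_y (h : Relations x y) : Commute y ζ := by
  rw [Commute, SemiconjBy, ← mul_pow_mul, ← h.mul_pow_three]

lemma xyxy (h : Relations x y) (g : H) : x * (y * (x * (y * g))) = ζ * (y * (x * (x * g))) := by
  simp only [pow_three, mul_assoc, h.x_mul_x_mul_x, h.y_mul_y]

lemma yxyx (h : Relations x y) (g : H) : y * (x * (y * (x * g))) = ζ * (x * (x * (y * g))) := by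
  simp only [h.mul_pow_three, pow_three, mul_assoc, h.x_mul_x_mul_x, h.y_mul_y]

lemma mul_yxxy (h : Relations x y) (g : H) :
    ζ * (y * (x * (x * (y * g)))) = x * (y * (x * g)) := by
  simp only [pow_three, mul_assoc, h.x_mul_x_mul_x, h.y_mul_y]

lemma mul_xxyxx (h : Relations x y) (g : H) :
    ζ * (x * (x * (y * (x * (x * g))))) = y * (x * (y * g)) := by
  simp only [h.mul_pow_three, pow_three, mul_assoc, h.x_mul_x_mul_x, h.y_mul_y]

lemma pow_four (h : Relations x y) : ζ ^ 4 = 1 := by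
  have key (g : H) : ζ ^ 4 * (y * (x * (y * g))) = y * (x * (y * g)) :=
    calc ζ ^ 4 * (y * (x * (y * g)))
        = ζ ^ 3 * (ζ * (y * (x * (x * (x * (x * (y * g))))))) := by
          rw [h.x_mul_x_mul_x, pow_succ ζ 3, mul_assoc]
      _ = ζ ^ 3 * (x * (y * (x * (y * (x * (x * (y * g))))))) := by rw [← h.xyxy]
      _ = ζ ^ 2 * (x * (y * (x * (ζ * (y * (x * (x * (y * g)))))))) := by
          rw [pow_succ ζ 2, mul_assoc]
          simp only [h.commute_x.left_comm, h.commute_y.left_comm]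
      _ = ζ * (x * (ζ * (y * (x * (x * (y * (x * g))))))) := by
          rw [h.mul_yxxy, pow_two, mul_assoc, h.commute_x.left_comm]
      _ = y * (x * (y * g)) := by rw [h.mul_yxxy, h.mul_xxyxx]
  simpa using key 1

lemma yxxy (h : Relations x y) (g : H) :
    y * (x * (x * (y * g))) = ζ ^ 3 * (x * (y * (x * g))) := by
  rw [← h.mul_yxxy, ← mul_assoc (ζ ^ 3), ← pow_succ, h.pow_four, one_mul]

lemma xxyxx (h : Relations x y) (g : H) :
    x * (x * (y * (x * (x * g)))) = ζ ^ 3 * (y * (x * (y * g))) := by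
  rw [← h.mul_xxyxx, ← mul_assoc (ζ ^ 3), ← pow_succ, h.pow_four, one_mul]

-- The reduction rules above carry a tail `g`; the trailing `1` gives them one to match.
lemma word_mul_x (h : Relations x y) (t : Fin 12) :
    word x y t * x = normalForm x y (mulXTable t) := by
  rw [← mul_one (word x y t * x), ← mul_one (normalForm x y _)]
  fin_cases t <;> simp [word, normalForm, mulXTable, mul_assoc, -mul_one, ZMod.val_one'',
    ZMod.val_ofNat, h.x_mul_x_mul_x, h.yxyx, h.xxyxx]

lemma word_mul_y (h : Relations x y) (t : Fin 12) :
    word x y t * y = normalForm x y (mulYTable t) := by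
  rw [← mul_one (word x y t * y), ← mul_one (normalForm x y _)]
  fin_cases t <;> simp [word, normalForm, mulYTable, mul_assoc, -mul_one, ZMod.val_one'',
    ZMod.val_ofNat, h.y_mul_y, h.xyxy, h.yxxy, h.commute_x.left_comm,
    (h.commute_x.pow_right 3).left_comm]

lemma normalForm_mul_of_word_mul (h : Relations x y) {g : H} {s : Fin 12 → ZMod 4 × Fin 12}
    (hs : ∀ t, word x y t * g = normalForm x y (s t)) (p : ZMod 4 × Fin 12) :
    normalForm x y p * g = normalForm x y (applyTable s p) := by
  rw [normalForm, mul_assoc, hs, normalForm, normalForm, applyTable, ← mul_assoc,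
    pow_val_add_of_pow_eq_one h.pow_four]

lemma mem_range_normalForm (h : Relations x y) {g : H} (hg : g ∈ Subgroup.closure {x, y}) :
    g ∈ Set.range (normalForm x y) := by
  have hx : ∀ p, normalForm x y p * x = normalForm x y (applyTable mulXTable p) :=
    h.normalForm_mul_of_word_mul h.word_mul_x
  have hy : ∀ p, normalForm x y p * y = normalForm x y (applyTable mulYTable p) :=
    h.normalForm_mul_of_word_mul h.word_mul_y
  have hx_inv : x⁻¹ = x * x := inv_eq_of_mul_eq_one_right (by simpa using h.x_mul_x_mul_x 1)
  have hy_inv : y⁻¹ = y := inv_eq_of_mul_eq_one_right (by simpa using h.y_mul_y 1)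
  induction hg using Subgroup.closure_induction_right with
  | one => exact ⟨(0, 0), by simp [normalForm, word]⟩
  | mul_right _ _ s hs ih =>
    obtain ⟨p, rfl⟩ := ih
    rcases hs with rfl | rfl
    exacts [⟨_, (hx p).symm⟩, ⟨_, (hy p).symm⟩]
  | mul_inv_cancel _ _ s hs ih =>
    obtain ⟨p, rfl⟩ := ih
    rcases hs with rfl | rfl
    exacts [⟨_, by rw [hx_inv, ← mul_assoc, hx, hx]⟩, ⟨_, by rw [hy_inv, hy]⟩]

end Relations

def a : G6 := PresentedGroup.of 0

def b : G6 := PresentedGroup.of 1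

lemma relations_a_b : Relations a b where
  x_pow_three := by
    have := PresentedGroup.one_of_mem (rels := G6rels) (Set.mem_insert _ _)
    rwa [map_pow] at this
  y_sq := by
    have := PresentedGroup.one_of_mem (rels := G6rels)
      (Set.mem_insert_of_mem _ (Set.mem_insert _ _))
    rwa [map_pow] at this
  mul_pow_three := by
    have := PresentedGroup.one_of_mem (rels := G6rels)
      (Set.mem_insert_of_mem _ (Set.mem_insert_of_mem _ rfl))
    rwa [map_mul, map_inv, map_pow, map_pow, map_mul, map_mul, mul_inv_eq_one] at this

lemma mem_closure_a_b (g : G6) : g ∈ Subgroup.closure {a, b} := by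
  refine PresentedGroup.generated_by G6rels _ (fun j => ?_) g
  fin_cases j
  exacts [Subgroup.subset_closure (Set.mem_insert _ _),
    Subgroup.subset_closure (Set.mem_insert_of_mem _ rfl)]

def lift (h : Relations x y) : G6 →* H :=
  PresentedGroup.toGroup (f := ![x, y]) <| by
    rintro r (rfl | rfl | rfl) <;> simp [h.x_pow_three, h.y_sq, h.mul_pow_three]

lemma lift_normalForm (h : Relations x y) (p : ZMod 4 × Fin 12) :
    lift h (normalForm a b p) = normalForm x y p := by
  have ha : lift h a = x := PresentedGroup.toGroup.of _
  have hb : lift h b = y := PresentedGroup.toGroup.of _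
  rw [map_normalForm, ha, hb]

/-- Reflections of orders 3 and 2 over `𝔽₁₃`, which contains the twelfth roots of unity. -/
def matA : GL (Fin 2) (ZMod 13) := ⟨!![0, 1; 4, 10], !![4, 10; 1, 0], by decide, by decide⟩

def matB : GL (Fin 2) (ZMod 13) := ⟨!![0, 2; 7, 0], !![0, 2; 7, 0], by decide, by decide⟩

lemma relations_matA_matB : Relations matA matB where
  x_pow_three := Units.ext (by decide)
  y_sq := Units.ext (by decide)
  mul_pow_three := Units.ext (by decide)

lemma normalForm_matA_matB_injective : Function.Injective (normalForm matA matB) := by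
  decide

end G6

/-- `G₆` has order 48. -/
theorem G6_card : Nat.card G6 = 48 := by
  have hsurj : Function.Surjective (G6.normalForm G6.a G6.b) := fun g =>
    G6.relations_a_b.mem_range_normalForm (G6.mem_closure_a_b g)
  have hinj : Function.Injective (G6.normalForm G6.a G6.b) := by
    refine Function.Injective.of_comp (f := G6.lift G6.relations_matA_matB) ?_
    simpa [Function.comp_def, G6.lift_normalForm] using G6.normalForm_matA_matB_injective
  rw [← Nat.card_eq_of_bijective _ ⟨hinj, hsurj⟩, Nat.card_prod, Nat.card_zmod, Nat.card_fin]
end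

section
/- In G_6, every conjugate of A or of A^{-1} has order 3, and every conjugate of B has order 2. -/
/-- The generator `A` of `G₆`. -/
def G6A : G6 := PresentedGroup.of 0

/-- The generator `B` of `G₆`. -/
def G6B : G6 := PresentedGroup.of 1


def fA : Fin 2 → Multiplicative (ZMod 3) := fun i => if i = 0 then Multiplicative.ofAdd 1 else 1
def fB : Fin 2 → Multiplicative (ZMod 2) := fun i => if i = 1 then Multiplicative.ofAdd 1 else 1

lemma fA_rels : ∀ r ∈ G6rels, FreeGroup.lift fA r = 1 := by
  intro r hr
  rcases hr with h | h | h <;> subst h <;> simp [fA] <;> decide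

lemma fB_rels : ∀ r ∈ G6rels, FreeGroup.lift fB r = 1 := by
  intro r hr
  rcases hr with h | h | h <;> subst h <;> simp [fB] <;> decide

def φA : G6 →* Multiplicative (ZMod 3) := PresentedGroup.toGroup fA_rels
def φB : G6 →* Multiplicative (ZMod 2) := PresentedGroup.toGroup fB_rels

lemma rel_one {r : FreeGroup (Fin 2)} (hr : r ∈ G6rels) :
    (QuotientGroup.mk r : PresentedGroup G6rels) = 1 := by
  rw [QuotientGroup.eq_one_iff]
  exact Subgroup.subset_normalClosure hr

lemma A_pow : G6A ^ 3 = 1 := rel_one (by left; rfl)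
lemma B_pow : G6B ^ 2 = 1 := rel_one (by right; left; rfl)

lemma A_ne_one : G6A ≠ 1 := by
  intro h
  have h2 : φA G6A = Multiplicative.ofAdd (1 : ZMod 3) := by
    exact PresentedGroup.toGroup.of fA_rels
  rw [h, map_one] at h2
  exact absurd h2.symm (by decide)

lemma B_ne_one : G6B ≠ 1 := by
  intro h
  have h2 : φB G6B = Multiplicative.ofAdd (1 : ZMod 2) := by
    exact PresentedGroup.toGroup.of fB_rels
  rw [h, map_one] at h2
  exact absurd h2.symm (by decide)

lemma orderA : orderOf G6A = 3 := orderOf_eq_prime A_pow A_ne_one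
lemma orderB : orderOf G6B = 2 := orderOf_eq_prime B_pow B_ne_one

/-- In `G₆`, every conjugate of `A` or of `A⁻¹` has order 3 and every conjugate of
`B` has order 2. -/
theorem G6_reflection_orders :
    (∀ g : G6, IsConj G6A g → orderOf g = 3) ∧
    (∀ g : G6, IsConj G6A⁻¹ g → orderOf g = 3) ∧
    (∀ g : G6, IsConj G6B g → orderOf g = 2) := by
  refine ⟨fun g h => ?_, fun g h => ?_, fun g h => ?_⟩ <;>
    obtain ⟨c, hc⟩ := h
  · rw [← SemiconjBy.orderOf_eq _ hc, orderA]
  · rw [← SemiconjBy.orderOf_eq _ hc, orderOf_inv, orderA]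
  · rw [← SemiconjBy.orderOf_eq _ hc, orderB]
end

section
/- In G_6, if x is conjugate to A or A^{-1} and y is conjugate to B, then the Hurwitz orbit of the pair (x, y) under the Hurwitz move σ(x, y) = (y, y^{-1} x y) has exactly 6 elements, i.e., σ^6(x, y) = (x, y) and σ^k(x, y) ≠ (x, y) for 1 ≤ k ≤ 5. -/
/-- The Hurwitz move on pairs: `(x, y) ↦ (y, y⁻¹ x y)`. -/
def hurwitzPair {G : Type*} [Group G] : G × G → G × G :=
  fun p => (p.2, p.2⁻¹ * p.1 * p.2)

open Equiv Subgroup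

section Hurwitz

variable {G H : Type*} [Group G] [Group H]

theorem hurwitzPair_iterate_two (x y : G) :
    hurwitzPair^[2] (x, y) = ((x * y)⁻¹ * x * (x * y), (x * y)⁻¹ * y * (x * y)) := by
  simp only [Function.iterate_succ, Function.iterate_zero, Function.comp_apply, id, hurwitzPair,
    Prod.mk.injEq]
  constructor <;> group

theorem hurwitzPair_iterate_two_mul (n : ℕ) (x y : G) :
    hurwitzPair^[2 * n] (x, y) =
      (((x * y) ^ n)⁻¹ * x * (x * y) ^ n, ((x * y) ^ n)⁻¹ * y * (x * y) ^ n) := by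
  induction n with
  | zero => simp
  | succ n ih =>
    have hprod : ((x * y) ^ n)⁻¹ * x * (x * y) ^ n * (((x * y) ^ n)⁻¹ * y * (x * y) ^ n) =
        x * y := by
      rw [show ∀ c : G, c⁻¹ * x * c * (c⁻¹ * y * c) = c⁻¹ * (x * y) * c by intro c; group,
        ((Commute.refl (x * y)).pow_left n).inv_left.eq, inv_mul_cancel_right]
    rw [show 2 * (n + 1) = 2 + 2 * n by ring, Function.iterate_add_apply, ih,
      hurwitzPair_iterate_two, hprod, pow_succ]
    simp only [Prod.mk.injEq]
    constructor <;> group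

theorem hurwitzPair_iterate_two_mul_of_mem_center {n : ℕ} {x y : G}
    (h : (x * y) ^ n ∈ center G) : hurwitzPair^[2 * n] (x, y) = (x, y) := by
  simp only [hurwitzPair_iterate_two_mul, mem_center_iff.mp h, mul_inv_cancel_left]

theorem hurwitzPair_iterate_map (f : G →* H) (k : ℕ) (p : G × G) :
    hurwitzPair^[k] (Prod.map f f p) = Prod.map f f (hurwitzPair^[k] p) := by
  have hf : Function.Semiconj (Prod.map f f) hurwitzPair hurwitzPair := fun _ => by
    simp [hurwitzPair]
  exact (hf.iterate_right k p).symm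

end Hurwitz

section PermFinFour

-- In `S₄` these hypotheses say that `a` is a 3-cycle and `b` a double transposition.
variable {a b : Perm (Fin 4)}

set_option maxRecDepth 100000 in
theorem Equiv.Perm.fin4_mul_pow_three_eq_one (ha : orderOf a = 3) (hb : orderOf b = 2)
    (hb' : sign b = 1) : (a * b) ^ 3 = 1 := by
  rw [orderOf_eq_prime_iff] at ha hb
  revert a b
  decide

set_option maxRecDepth 100000 in
theorem Equiv.Perm.fin4_hurwitzPair_iterate_ne (ha : orderOf a = 3) (hb : orderOf b = 2)
    (hb' : sign b = 1) {k : ℕ} (hk₁ : 1 ≤ k) (hk₅ : k ≤ 5) :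
    hurwitzPair^[k] (a, b) ≠ (a, b) := by
  rw [orderOf_eq_prime_iff] at ha hb
  have hk : k ∈ Finset.Icc 1 5 := Finset.mem_Icc.mpr ⟨hk₁, hk₅⟩
  revert a b k
  decide

end PermFinFour

theorem IsConj.orderOf_eq {G : Type*} [Group G] {a b : G} (h : IsConj a b) :
    orderOf a = orderOf b := by
  obtain ⟨c, hc⟩ := h
  exact SemiconjBy.orderOf_eq _ hc

namespace G6

theorem A_pow_three : G6A ^ 3 = 1 := by
  have h := PresentedGroup.one_of_mem (rels := G6rels) (x := FreeGroup.of 0 ^ 3) (by simp [G6rels])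
  rwa [map_pow] at h

theorem A_zpow_three : G6A ^ (3 : ℤ) = 1 := by
  rw [zpow_ofNat, A_pow_three]

theorem B_sq : G6B ^ 2 = 1 := by
  have h := PresentedGroup.one_of_mem (rels := G6rels) (x := FreeGroup.of 1 ^ 2) (by simp [G6rels])
  rwa [map_pow] at h

theorem mul_pow_three_comm : (G6A * G6B) ^ 3 = (G6B * G6A) ^ 3 := by
  have h := PresentedGroup.mk_eq_mk_of_mul_inv_mem (rels := G6rels)
    (x := (FreeGroup.of 0 * FreeGroup.of 1) ^ 3) (y := (FreeGroup.of 1 * FreeGroup.of 0) ^ 3)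
    (by simp [G6rels])
  rwa [map_pow, map_pow, map_mul, map_mul] at h

theorem A_inv : G6A⁻¹ = G6A * G6A :=
  inv_eq_of_mul_eq_one_right (by rw [← A_pow_three, pow_three])

theorem B_inv : G6B⁻¹ = G6B :=
  inv_eq_of_mul_eq_one_right (by rw [← sq, B_sq])

def z : G6 := (G6A * G6B) ^ 3

theorem z_mem_center : z ∈ center G6 := by
  have hA : G6A ∈ centralizer {z} := by
    rw [mem_centralizer_singleton_iff]
    calc G6A * z = G6A * (G6B * G6A) ^ 3 := by rw [z, mul_pow_three_comm]
      _ = (G6A * G6B) ^ 3 * G6A := by simp only [pow_three]; group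
  have hB : G6B ∈ centralizer {z} := by
    rw [mem_centralizer_singleton_iff]
    calc G6B * z = G6B⁻¹ * (G6B * G6A) ^ 3 := by rw [B_inv, z, mul_pow_three_comm]
      _ = (G6A * G6B) ^ 3 * G6B⁻¹ := by simp only [pow_three]; group
      _ = z * G6B := by rw [B_inv, z]
  rw [mem_center_iff]
  intro g
  refine mem_centralizer_singleton_iff.mp (PresentedGroup.generated_by G6rels _ ?_ g)
  intro i
  fin_cases i
  exacts [hA, hB]

theorem commute_z (g : G6) : Commute g z := mem_center_iff.mp z_mem_center g

theorem B_mul_A_mul_B : G6B * G6A * G6B = z * (G6A⁻¹ * G6B * G6A⁻¹) :=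
  calc G6B * G6A * G6B = (G6B * G6A) ^ 3 * (G6A⁻¹ * G6B⁻¹ * G6A⁻¹) := by rw [pow_three]; group
    _ = z * (G6A⁻¹ * G6B * G6A⁻¹) := by rw [z, mul_pow_three_comm, B_inv]

theorem B_mul_A_inv_mul_B : G6B * G6A⁻¹ * G6B = z⁻¹ * (G6A * G6B * G6A) :=
  calc G6B * G6A⁻¹ * G6B = (G6B⁻¹ * G6A * G6B⁻¹)⁻¹ := by group
    _ = (z * (G6A⁻¹ * G6B * G6A⁻¹))⁻¹ := by rw [B_inv, B_mul_A_mul_B]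
    _ = G6A * G6B⁻¹ * G6A * z⁻¹ := by group
    _ = z⁻¹ * (G6A * G6B * G6A) := by rw [B_inv, (commute_z _).inv_right.eq]

theorem mul_z_zpow_mul (g w : G6) (n : ℤ) : g * (z ^ n * w) = z ^ n * (g * w) := by
  rw [← mul_assoc, ((commute_z g).zpow_right n).eq, mul_assoc]

def HasNormalForm (g : G6) : Prop :=
  ∃ n i j : ℤ, g = z ^ n * G6A ^ j ∨ g = z ^ n * (G6A ^ i * G6B * G6A ^ j)

theorem HasNormalForm.A_mul {g : G6} (h : HasNormalForm g) : HasNormalForm (G6A * g) := by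
  obtain ⟨n, i, j, rfl | rfl⟩ := h
  · exact ⟨n, i, 1 + j, Or.inl (by rw [mul_z_zpow_mul]; group)⟩
  · exact ⟨n, 1 + i, j, Or.inr (by rw [mul_z_zpow_mul]; group)⟩

theorem HasNormalForm.B_mul {g : G6} (h : HasNormalForm g) : HasNormalForm (G6B * g) := by
  obtain ⟨n, i, j, rfl | rfl⟩ := h
  · exact ⟨n, 0, j, Or.inr (by rw [mul_z_zpow_mul]; group)⟩
  rw [mul_z_zpow_mul, zpow_eq_zpow_emod i A_zpow_three]
  obtain h | h | h : i % 3 = 0 ∨ i % 3 = 1 ∨ i % 3 = 2 := by omega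
  · refine ⟨n, 0, j, Or.inl ?_⟩
    rw [h]
    nth_rewrite 1 [← B_inv]
    group
  · refine ⟨n + 1, -1, j - 1, Or.inr ?_⟩
    calc z ^ n * (G6B * (G6A ^ (i % 3) * G6B * G6A ^ j))
        = z ^ n * (G6B * G6A * G6B) * G6A ^ j := by rw [h]; group
      _ = z ^ (n + 1) * (G6A ^ (-1 : ℤ) * G6B * G6A ^ (j - 1)) := by
        rw [B_mul_A_mul_B]; group
  · refine ⟨n - 1, 1, j + 1, Or.inr ?_⟩
    calc z ^ n * (G6B * (G6A ^ (i % 3) * G6B * G6A ^ j))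
        = z ^ n * (G6B * (G6A ^ 3 * G6A⁻¹) * G6B) * G6A ^ j := by rw [h]; group
      _ = z ^ (n - 1) * (G6A ^ (1 : ℤ) * G6B * G6A ^ (j + 1)) := by
        rw [A_pow_three, one_mul, B_mul_A_inv_mul_B]; group

theorem hasNormalForm (g : G6) : HasNormalForm g := by
  have hg : g ∈ closure (Set.range PresentedGroup.of) := by
    rw [PresentedGroup.closure_range_of]
    exact mem_top g
  induction hg using closure_induction_left with
  | one => exact ⟨0, 0, 0, Or.inl (by simp)⟩
  | mul_left x hx y _ ih =>
    obtain ⟨i, rfl⟩ := hx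
    fin_cases i
    exacts [ih.A_mul, ih.B_mul]
  | inv_mul_cancel x hx y _ ih =>
    obtain ⟨i, rfl⟩ := hx
    fin_cases i
    · change HasNormalForm (G6A⁻¹ * y)
      rw [A_inv, mul_assoc]
      exact ih.A_mul.A_mul
    · change HasNormalForm (G6B⁻¹ * y)
      rw [B_inv]
      exact ih.B_mul

set_option maxRecDepth 10000 in
def toPerm : G6 →* Perm (Fin 4) :=
  PresentedGroup.toGroup (f := ![c[0, 1, 2], c[0, 1] * c[2, 3]]) (by
    rintro r (rfl | rfl | rfl) <;>
      simp only [map_mul, map_pow, map_inv, FreeGroup.lift_apply_of] <;> decide)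

theorem toPerm_A : toPerm G6A = c[0, 1, 2] := PresentedGroup.toGroup.of _

theorem toPerm_B : toPerm G6B = c[0, 1] * c[2, 3] := PresentedGroup.toGroup.of _

theorem toPerm_z : toPerm z = 1 := by
  rw [z, map_pow, map_mul, toPerm_A, toPerm_B]
  decide

theorem orderOf_toPerm_A : orderOf (toPerm G6A) = 3 := by
  rw [toPerm_A, orderOf_eq_prime_iff]
  decide

theorem mem_center_of_toPerm_eq_one {g : G6} (hg : toPerm g = 1) : g ∈ center G6 := by
  obtain ⟨n, i, j, rfl | rfl⟩ := hasNormalForm g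
  · simp only [map_mul, map_zpow, toPerm_z, one_zpow, one_mul] at hg
    obtain ⟨k, rfl⟩ := orderOf_toPerm_A ▸ orderOf_dvd_iff_zpow_eq_one.mpr hg
    rw [zpow_mul, zpow_natCast, A_pow_three, one_zpow, mul_one]
    exact zpow_mem z_mem_center n
  · exfalso
    simp only [map_mul, map_zpow, toPerm_z, toPerm_A, toPerm_B, one_zpow, one_mul] at hg
    have hfix : ∀ m : ℤ, (c[(0 : Fin 4), 1, 2] ^ m) 3 = 3 :=
      Perm.zpow_apply_eq_self_of_apply_eq_self (by decide)
    have hpt : (c[0, 1] * c[2, 3] : Perm (Fin 4)) 3 = 2 := by decide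
    have h3 := Perm.ext_iff.mp hg 3
    rw [Perm.mul_apply, hfix, Perm.mul_apply, hpt, Perm.one_apply, ← hfix i] at h3
    exact absurd ((c[(0 : Fin 4), 1, 2] ^ i).injective h3) (by decide)

theorem orderOf_toPerm_of_isConj_A {x : G6} (hx : IsConj G6A x ∨ IsConj G6A⁻¹ x) :
    orderOf (toPerm x) = 3 := by
  obtain h | h := hx <;> rw [← (toPerm.map_isConj h).orderOf_eq]
  · exact orderOf_toPerm_A
  · rw [map_inv, orderOf_inv, orderOf_toPerm_A]

theorem orderOf_toPerm_of_isConj_B {y : G6} (hy : IsConj G6B y) : orderOf (toPerm y) = 2 := by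
  rw [← (toPerm.map_isConj hy).orderOf_eq, toPerm_B, orderOf_eq_prime_iff]
  decide

theorem sign_toPerm_of_isConj_B {y : G6} (hy : IsConj G6B y) : Perm.sign (toPerm y) = 1 := by
  have h := isConj_iff_eq.mp ((Perm.sign.comp toPerm).map_isConj hy)
  rw [MonoidHom.comp_apply, MonoidHom.comp_apply, toPerm_B] at h
  rw [← h]
  decide

end G6

/-- In `G₆`, if `x` is conjugate to `A` or `A⁻¹` and `y` is conjugate to `B`, then the
Hurwitz orbit of `(x, y)` has exactly 6 elements: `σ⁶(x,y) = (x,y)` and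
`σᵏ(x,y) ≠ (x,y)` for `1 ≤ k ≤ 5`. -/
theorem G6_mixed_order_pair_orbit (x y : G6)
    (hx : IsConj G6A x ∨ IsConj G6A⁻¹ x) (hy : IsConj G6B y) :
    hurwitzPair^[6] (x, y) = (x, y) ∧
    ∀ k : ℕ, 1 ≤ k → k ≤ 5 → hurwitzPair^[k] (x, y) ≠ (x, y) := by
  have ha := G6.orderOf_toPerm_of_isConj_A hx
  have hb := G6.orderOf_toPerm_of_isConj_B hy
  have hb' := G6.sign_toPerm_of_isConj_B hy
  refine ⟨hurwitzPair_iterate_two_mul_of_mem_center (n := 3) ?_, fun k hk₁ hk₅ hk => ?_⟩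
  · apply G6.mem_center_of_toPerm_eq_one
    rw [map_pow, map_mul]
    exact Perm.fin4_mul_pow_three_eq_one ha hb hb'
  · apply Perm.fin4_hurwitzPair_iterate_ne ha hb hb' hk₁ hk₅
    simpa [hk] using hurwitzPair_iterate_map G6.toPerm k (x, y)
end
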